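/- In a ⊴-minimal representative 𝓢 of a constructible set X, every swiss cheese B \ ⋃Sub(B,𝓢) for B on an even level of (𝓢,⊆) is nonempty. -/

import Mathlib

variable {U : Type*}

/-- A directed family: nonempty sets, any two nested or disjoint. -/
def DirFam (𝓑 : Set (Set U)) : Prop :=
  (∀ B ∈ 𝓑, B.Nonempty) ∧
    ∀ B₀ ∈ 𝓑, ∀ B₁ ∈ 𝓑, B₀ ⊆ B₁ ∨ B₁ ⊆ B₀ ∨ B₀ ∩ B₁ = ∅

/-- Constructible sets: finite boolean combinations of balls. -/
inductive Constr (𝓑 : Set (Set U)) : Set U → Prop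
  | ball {B : Set U} : B ∈ 𝓑 → Constr 𝓑 B
  | compl {X : Set U} : Constr 𝓑 X → Constr 𝓑 Xᶜ
  | union {X Y : Set U} : Constr 𝓑 X → Constr 𝓑 Y → Constr 𝓑 (X ∪ Y)

/-- Levels of a (finite) subset of a partial order: Lev 0 is the set of maximal
elements, and Lev (n+1) is Lev n of the set with its maximal elements removed. -/
def Lev {α : Type*} [PartialOrder α] : ℕ → Set α → Set α
  | 0, S => {a | a ∈ S ∧ ∀ b ∈ S, a ≤ b → a = b}
  | n + 1, S => Lev n (S \ {a | a ∈ S ∧ ∀ b ∈ S, a ≤ b → a = b})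

/-- The swiss cheese operator: the union, over balls B on even levels of 𝓢, of
B minus the union of its immediate predecessors (the next-level balls inside B). -/
def Ch (𝓢 : Set (Set U)) : Set U :=
  ⋃ n : ℕ, ⋃ B ∈ Lev (2 * n) 𝓢, B \ ⋃₀ {C | C ∈ Lev (2 * n + 1) 𝓢 ∧ C ⊆ B}

/-- A finite forest: the elements above any given element form a chain. -/
def FinForest {α : Type*} [PartialOrder α] (S : Set α) : Prop :=
  ∀ a ∈ S, IsChain (· ≤ ·) {b | b ∈ S ∧ a ≤ b}

/-- The quasi-order ⊴ on finite forests: first by cardinality, then by top-heaviness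
of the level sizes. -/
def ForestQO {α β : Type*} [PartialOrder α] [PartialOrder β] (S : Set α) (T : Set β) :
    Prop :=
  S.ncard < T.ncard ∨
    (S.ncard = T.ncard ∧
      ((∀ n, (Lev n S).ncard = (Lev n T).ncard) ∨
        ∃ n, (∀ i < n, (Lev i S).ncard = (Lev i T).ncard) ∧
          (Lev n T).ncard < (Lev n S).ncard))

/-! The balls of `𝓢` containing a point `x` form a finite chain, and the level of its smallest
member is the number of balls above it; hence `x ∈ Ch 𝓢` exactly when `x` lies in an odd number
of balls of `𝓢`. If the swiss cheese of a ball `B` were empty, `B` would be covered by its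
children, which are pairwise disjoint, so every point of `B` lies in exactly one of them.
Deleting `B` and its children then changes each of these counts by `0` or `2`: it keeps `Ch 𝓢`
and makes `𝓢` smaller, against `⊴`-minimality. -/

open Set

section Levels

variable {α : Type*} [PartialOrder α] {S : Set α} {a b : α}

theorem Lev_subset : ∀ (n : ℕ) (S : Set α), Lev n S ⊆ S
  | 0, _ => fun _ ha => ha.1
  | n + 1, _ => fun _ ha => (Lev_subset n _ ha).1

theorem isAntichain_Lev : ∀ (n : ℕ) (S : Set α), IsAntichain (· ≤ ·) (Lev n S)
  | 0, _ => fun _ ha b hb hne hab => hne (ha.2 b hb.1 hab)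
  | n + 1, _ => isAntichain_Lev n _

theorem mem_Lev_zero_iff : a ∈ Lev 0 S ↔ a ∈ S ∧ S ∩ Ioi a = ∅ := by
  simp only [Lev, mem_ofPred_eq, eq_empty_iff_forall_notMem, mem_inter_iff, mem_Ioi, not_and]
  refine and_congr_right fun _ => forall₂_congr fun b _ => ?_
  exact ⟨fun h hab => hab.ne (h hab.le), fun h hab => by_contra fun hne => h (hab.lt_of_ne hne)⟩

theorem FinForest.subset {T : Set α} (hF : FinForest S) (hTS : T ⊆ S) : FinForest T :=
  fun a ha _ hb _ hc hbc => hF a (hTS ha) ⟨hTS hb.1, hb.2⟩ ⟨hTS hc.1, hc.2⟩ hbc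

/-- Above a non-maximal element of a finite forest lies exactly one maximal element. -/
theorem FinForest.inter_Ioi_eq_insert_sdiff_Lev_zero (hS : S.Finite) (hF : FinForest S) (ha : a ∈ S)
    (ha₀ : a ∉ Lev 0 S) : ∃ t ∈ Lev 0 S, S ∩ Ioi a = insert t ((S \ Lev 0 S) ∩ Ioi a) := by
  obtain ⟨b, hbS, hab⟩ := nonempty_iff_ne_empty.2 fun h => ha₀ (mem_Lev_zero_iff.2 ⟨ha, h⟩)
  obtain ⟨t, hbt, htS, htmax⟩ := hS.exists_le_maximal hbS
  have ht₀ : t ∈ Lev 0 S := ⟨htS, fun c hcS htc => le_antisymm htc (htmax hcS htc)⟩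
  have hat : a < t := lt_of_lt_of_le hab hbt
  refine ⟨t, ht₀, Set.ext fun c => ⟨fun ⟨hcS, hac⟩ => ?_, ?_⟩⟩
  · by_cases hc₀ : c ∈ Lev 0 S
    · refine .inl ?_
      rcases (hF a ha).total ⟨hcS, hac.le⟩ ⟨htS, hat.le⟩ with hct | htc
      · exact hc₀.2 t htS hct
      · exact (ht₀.2 c hcS htc).symm
    · exact .inr ⟨⟨hcS, hc₀⟩, hac⟩
  · rintro (rfl | ⟨⟨hcS, -⟩, hac⟩)
    exacts [⟨htS, hat⟩, ⟨hcS, hac⟩]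

theorem mem_Lev_iff (hS : S.Finite) (hF : FinForest S) {n : ℕ} :
    a ∈ Lev n S ↔ a ∈ S ∧ (S ∩ Ioi a).ncard = n := by
  induction n generalizing S with
  | zero => rw [mem_Lev_zero_iff, ncard_eq_zero (hS.subset inter_subset_left)]
  | succ n ih =>
    change a ∈ Lev n (S \ Lev 0 S) ↔ _
    rw [ih hS.sdiff (hF.subset sdiff_subset)]
    by_cases ha₀ : a ∈ Lev 0 S
    · have hzero := (mem_Lev_zero_iff.1 ha₀).2
      simp [ha₀, hzero]
    · by_cases haS : a ∈ S
      · obtain ⟨t, ht₀, heq⟩ := hF.inter_Ioi_eq_insert_sdiff_Lev_zero hS haS ha₀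
        rw [heq, ncard_insert_of_notMem (fun ht => ht.1.2 ht₀) (hS.sdiff.subset inter_subset_left)]
        simp [haS, ha₀]
      · simp [haS]

theorem eq_of_mem_Lev_of_mem_Lev (hS : S.Finite) (hF : FinForest S) {m n : ℕ}
    (hm : a ∈ Lev m S) (hn : a ∈ Lev n S) : m = n :=
  ((mem_Lev_iff hS hF).1 hm).2.symm.trans ((mem_Lev_iff hS hF).1 hn).2

theorem FinForest.inter_Ioi_eq_insert_of_forall_not_lt (hF : FinForest S) (ha : a ∈ S)
    (hb : b ∈ S) (hab : a < b) (hnone : ∀ c ∈ S, a < c → ¬ c < b) :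
    S ∩ Ioi a = insert b (S ∩ Ioi b) := by
  refine Set.ext fun c => ⟨fun ⟨hcS, hac⟩ => ?_, ?_⟩
  · rcases eq_or_ne c b with rfl | hcb
    · exact .inl rfl
    rcases hF a ha ⟨hcS, hac.le⟩ ⟨hb, hab.le⟩ hcb with hle | hle
    · exact absurd (hle.lt_of_ne hcb) (hnone c hcS hac)
    · exact .inr ⟨hcS, hle.lt_of_ne hcb.symm⟩
  · rintro (rfl | ⟨hcS, hbc⟩)
    exacts [⟨hb, hab⟩, ⟨hcS, hab.trans hbc⟩]

end Levels

section DirFam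

variable {𝓑 𝓢 : Set (Set U)}

theorem DirFam.mono (h : DirFam 𝓑) (h𝓢 : 𝓢 ⊆ 𝓑) : DirFam 𝓢 :=
  ⟨fun B hB => h.1 B (h𝓢 hB), fun B₀ h₀ B₁ h₁ => h.2 B₀ (h𝓢 h₀) B₁ (h𝓢 h₁)⟩

theorem DirFam.subset_or_subset (h : DirFam 𝓢) {A B : Set U} (hA : A ∈ 𝓢) (hB : B ∈ 𝓢)
    {x : U} (hxA : x ∈ A) (hxB : x ∈ B) : A ⊆ B ∨ B ⊆ A := by
  rcases h.2 A hA B hB with hAB | hBA | hdisj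
  exacts [.inl hAB, .inr hBA, (eq_empty_iff_forall_notMem.1 hdisj x ⟨hxA, hxB⟩).elim]

theorem DirFam.finForest (h : DirFam 𝓢) : FinForest 𝓢 := fun A hA _ hB _ hC _ =>
  let ⟨_, hy⟩ := h.1 A hA
  h.subset_or_subset hB.1 hC.1 (hB.2 hy) (hC.2 hy)

theorem DirFam.exists_least_mem (h : DirFam 𝓢) (hfin : 𝓢.Finite) {x : U}
    (hx : {A ∈ 𝓢 | x ∈ A}.Nonempty) : ∃ A₀ ∈ 𝓢, x ∈ A₀ ∧ ∀ A ∈ 𝓢, x ∈ A → A₀ ⊆ A := by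
  obtain ⟨A₀, ⟨hA₀S, hxA₀⟩, hmin⟩ := (hfin.subset (sep_subset 𝓢 (x ∈ ·))).exists_minimal hx
  refine ⟨A₀, hA₀S, hxA₀, fun A hAS hxA => ?_⟩
  rcases h.subset_or_subset hA₀S hAS hxA₀ hxA with hle | hle
  exacts [hle, hmin ⟨hAS, hxA⟩ hle]

theorem sep_mem_eq_insert_inter_Ioi {A₀ : Set U} {x : U} (hA₀ : A₀ ∈ 𝓢) (hx : x ∈ A₀)
    (hleast : ∀ A ∈ 𝓢, x ∈ A → A₀ ⊆ A) : {A ∈ 𝓢 | x ∈ A} = insert A₀ (𝓢 ∩ Ioi A₀) := by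
  refine Set.ext fun A => ⟨fun ⟨hAS, hxA⟩ => ?_, ?_⟩
  · rcases eq_or_ne A₀ A with rfl | hne
    exacts [.inl rfl, .inr ⟨hAS, (hleast A hAS hxA).lt_of_ne hne⟩]
  · rintro (rfl | ⟨hAS, hA₀A⟩)
    exacts [⟨hA₀, hx⟩, ⟨hAS, (mem_Ioi.1 hA₀A).le hx⟩]

theorem DirFam.notMem_sUnion_Lev_succ_iff (h : DirFam 𝓢) (hfin : 𝓢.Finite) {d : ℕ}
    {B : Set U} (hB : B ∈ Lev d 𝓢) {x : U} (hx : x ∈ B) :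
    x ∉ ⋃₀ {C | C ∈ Lev (d + 1) 𝓢 ∧ C ⊆ B} ↔ ∀ A ∈ 𝓢, x ∈ A → B ⊆ A := by
  have hF := h.finForest
  have hBS := Lev_subset d 𝓢 hB
  refine ⟨fun hnot A hAS hxA => by_contra fun hBA => hnot ?_, ?_⟩
  · have hAB : A ⊂ B := ssubset_of_subset_not_subset
      ((h.subset_or_subset hAS hBS hxA hx).resolve_right hBA) hBA
    obtain ⟨C, ⟨hCS, hxC, hCB⟩, hmax⟩ :=
      (hfin.subset fun _ hE => hE.1 : {E ∈ 𝓢 | x ∈ E ∧ E ⊂ B}.Finite).exists_maximal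
        ⟨A, hAS, hxA, hAB⟩
    have hup : 𝓢 ∩ Ioi C = insert B (𝓢 ∩ Ioi B) :=
      hF.inter_Ioi_eq_insert_of_forall_not_lt hCS hBS hCB fun E hES hCE hEB =>
        hCE.not_ge (hmax ⟨hES, hCE.le hxC, hEB⟩ hCE.le)
    have hC : C ∈ Lev (d + 1) 𝓢 := by
      rw [mem_Lev_iff hfin hF, hup, ncard_insert_of_notMem (fun hB' => self_notMem_Ioi hB'.2)
        (hfin.subset inter_subset_left), ((mem_Lev_iff hfin hF).1 hB).2]
      exact ⟨hCS, rfl⟩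
    exact ⟨C, ⟨hC, hCB.le⟩, hxC⟩
  · rintro hleast ⟨C, ⟨hC, hCB⟩, hxC⟩
    obtain rfl : C = B := hCB.antisymm (hleast C (Lev_subset _ _ hC) hxC)
    have := eq_of_mem_Lev_of_mem_Lev hfin hF hB hC
    omega

theorem DirFam.mem_Ch_iff (h : DirFam 𝓢) (hfin : 𝓢.Finite) {x : U} :
    x ∈ Ch 𝓢 ↔ Odd {A ∈ 𝓢 | x ∈ A}.ncard := by
  have hF := h.finForest
  have hcard : ∀ {A₀}, A₀ ∈ 𝓢 → x ∈ A₀ → (∀ A ∈ 𝓢, x ∈ A → A₀ ⊆ A) →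
      {A ∈ 𝓢 | x ∈ A}.ncard = (𝓢 ∩ Ioi A₀).ncard + 1 := fun hA₀ hx hleast => by
    rw [sep_mem_eq_insert_inter_Ioi hA₀ hx hleast,
      ncard_insert_of_notMem (fun h => self_notMem_Ioi h.2) (hfin.subset inter_subset_left)]
  simp only [Ch, mem_iUnion, mem_sdiff, exists_prop]
  constructor
  · rintro ⟨n, B, hB, hxB, hnot⟩
    rw [hcard (Lev_subset _ _ hB) hxB ((h.notMem_sUnion_Lev_succ_iff hfin hB hxB).1 hnot),
      ((mem_Lev_iff hfin hF).1 hB).2]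
    exact odd_two_mul_add_one n
  · intro hodd
    obtain ⟨A₀, hA₀, hxA₀, hleast⟩ :=
      h.exists_least_mem hfin (nonempty_of_ncard_ne_zero hodd.pos.ne')
    rw [hcard hA₀ hxA₀ hleast, Nat.odd_add_one, Nat.not_odd_iff_even] at hodd
    obtain ⟨n, hn⟩ := hodd
    have hlev : A₀ ∈ Lev (2 * n) 𝓢 := (mem_Lev_iff hfin hF).2 ⟨hA₀, by omega⟩
    exact ⟨n, A₀, hlev, hxA₀, (h.notMem_sUnion_Lev_succ_iff hfin hlev hxA₀).2 hleast⟩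

theorem DirFam.Ch_sdiff_insert_eq (h : DirFam 𝓢) (hfin : 𝓢.Finite) {B : Set U}
    {K : Set (Set U)} {m : ℕ} (hB : B ∈ 𝓢) (hK : K ⊆ Lev m 𝓢) (hKB : ∀ C ∈ K, C ⊂ B)
    (hcover : B ⊆ ⋃₀ K) : Ch (𝓢 \ insert B K) = Ch 𝓢 := by
  ext x
  rw [(h.mono sdiff_subset).mem_Ch_iff hfin.sdiff, h.mem_Ch_iff hfin]
  by_cases hxB : x ∈ B
  · obtain ⟨C, hCK, hxC⟩ := hcover hxB
    have hCS := Lev_subset _ _ (hK hCK)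
    have hunique : ∀ C' ∈ K, x ∈ C' → C' = C := fun C' hC' hxC' => by
      rcases h.subset_or_subset (Lev_subset _ _ (hK hC')) hCS hxC' hxC with hle | hle
      exacts [(isAntichain_Lev m 𝓢).eq (hK hC') (hK hCK) hle,
        ((isAntichain_Lev m 𝓢).eq (hK hCK) (hK hC') hle).symm]
    have hsplit : {A ∈ 𝓢 | x ∈ A} = insert B (insert C {A ∈ 𝓢 \ insert B K | x ∈ A}) := by
      ext A
      simp only [mem_insert_iff, mem_sdiff, mem_ofPred_eq]
      refine ⟨fun ⟨hAS, hxA⟩ => ?_, ?_⟩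
      · by_cases hA : A ∈ insert B K
        · rcases hA with rfl | hAK
          exacts [.inl rfl, .inr (.inl (hunique A hAK hxA))]
        · exact .inr (.inr ⟨⟨hAS, hA⟩, hxA⟩)
      · rintro (rfl | rfl | ⟨⟨hAS, -⟩, hxA⟩)
        exacts [⟨hB, hxB⟩, ⟨hCS, hxC⟩, ⟨hAS, hxA⟩]
    have hfin' : {A ∈ 𝓢 \ insert B K | x ∈ A}.Finite := hfin.sdiff.subset (sep_subset _ _)
    rw [hsplit, ncard_insert_of_notMem _ (hfin'.insert C), ncard_insert_of_notMem _ hfin',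
      Nat.odd_add_one, Nat.odd_add_one, not_not]
    · exact fun hC => hC.1.2 (.inr hCK)
    · rintro (hBC | hB')
      exacts [(hKB C hCK).ne hBC.symm, hB'.1.2 (.inl rfl)]
  · suffices hsame : {A ∈ 𝓢 \ insert B K | x ∈ A} = {A ∈ 𝓢 | x ∈ A} by rw [hsame]
    ext A
    refine ⟨fun hA => ⟨hA.1.1, hA.2⟩, fun hA => ⟨⟨hA.1, ?_⟩, hA.2⟩⟩
    rintro (rfl | hAK)
    exacts [hxB hA.2, hxB ((hKB A hAK).le hA.2)]

end DirFam

theorem stmt16_general (𝓑 : Set (Set U)) (h : DirFam 𝓑)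
    (X : Set U) (𝓢 : Set (Set U))
    (h𝓢 : 𝓢 ⊆ 𝓑) (hfS : 𝓢.Finite) (hS : Ch 𝓢 = X)
    (hminS : ∀ 𝓡 : Set (Set U), 𝓡 ⊆ 𝓑 → 𝓡.Finite → Ch 𝓡 = X → ForestQO 𝓢 𝓡) :
    ∀ (n : ℕ) (B : Set U), B ∈ Lev (2 * n) 𝓢 →
      (B \ ⋃₀ {C | C ∈ Lev (2 * n + 1) 𝓢 ∧ C ⊆ B}).Nonempty := by
  intro n B hB
  by_contra hempty
  set K := {C | C ∈ Lev (2 * n + 1) 𝓢 ∧ C ⊆ B}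
  have h𝓢' : DirFam 𝓢 := h.mono h𝓢
  have hBS : B ∈ 𝓢 := Lev_subset _ _ hB
  have hKB : ∀ C ∈ K, C ⊂ B := fun C hC => hC.2.ssubset_of_ne fun hCB => by
    have := eq_of_mem_Lev_of_mem_Lev hfS h𝓢'.finForest hB (hCB ▸ hC.1)
    omega
  have hcover : B ⊆ ⋃₀ K := sdiff_eq_empty.1 (not_nonempty_iff_eq_empty.1 hempty)
  have hCh : Ch (𝓢 \ insert B K) = X :=
    hS ▸ h𝓢'.Ch_sdiff_insert_eq hfS hBS (fun _ hC => hC.1) hKB hcover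
  have hlt : (𝓢 \ insert B K).ncard < 𝓢.ncard :=
    ncard_lt_ncard ((insert_subset hBS fun C hC => Lev_subset _ _ hC.1).sdiff_ssubset_of_nonempty
      (insert_nonempty B K)) hfS
  rcases hminS _ (sdiff_subset.trans h𝓢) hfS.sdiff hCh with hlt' | ⟨heq, -⟩ <;> omega

/-- In a ⊴-minimal representative, every swiss cheese on an even level is nonempty. -/
theorem stmt16 (𝓑 : Set (Set U)) (h : DirFam 𝓑) (hU : (Set.univ : Set U) ∈ 𝓑)
    (X : Set U) (hX : Constr 𝓑 X) (𝓢 : Set (Set U))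
    (h𝓢 : 𝓢 ⊆ 𝓑) (hfS : 𝓢.Finite) (hS : Ch 𝓢 = X)
    (hminS : ∀ 𝓡 : Set (Set U), 𝓡 ⊆ 𝓑 → 𝓡.Finite → Ch 𝓡 = X → ForestQO 𝓢 𝓡) :
    ∀ (n : ℕ) (B : Set U), B ∈ Lev (2 * n) 𝓢 →
      (B \ ⋃₀ {C | C ∈ Lev (2 * n + 1) 𝓢 ∧ C ⊆ B}).Nonempty :=
  stmt16_general 𝓑 h X 𝓢 h𝓢 hfS hS hminS
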